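/- Let P, Q be probability measures with g₀ = dP/dQ, and for a positive Q-integrable measurable function g define d(g₀, g) := ∫ (g − g₀) dQ − ∫ log(g/g₀) dP. Then d(g₀, g) ≥ ∫ (√g − √g₀)² dQ = 2 h_Q²(g₀, g), where h_Q²(g₀,g) := (1/2) ∫ (√g₀ − √g)² dQ. -/

import Mathlib

/-!
Pointwise, `log s ≤ s - 1` at `s = √(a/b)` gives `b log(a/b) ≤ 2(√a √b - b)`, which rearranges to
`(√a - √b)² ≤ a - b - b log(a/b)`. Integrating this against `Q` with `a = g`, `b = g₀`, and using
`dP = g₀ dQ` to rewrite `∫ g₀ log(g/g₀) dQ` as `∫ log(g/g₀) dP`, gives the inequality.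
-/

open MeasureTheory Real

namespace MeasureTheory

variable {X E : Type*} [MeasurableSpace X] {μ : Measure X} [NormedAddCommGroup E] [NormedSpace ℝ E]
  {f : X → ℝ}

theorem integral_withDensity_ofReal (hf : AEMeasurable f μ) (hf0 : 0 ≤ᵐ[μ] f) (φ : X → E) :
    ∫ x, φ x ∂μ.withDensity (fun x => ENNReal.ofReal (f x)) = ∫ x, f x • φ x ∂μ := by
  rw [integral_withDensity_eq_integral_toReal_smul₀ hf.ennreal_ofReal
    (ae_of_all _ fun _ => ENNReal.ofReal_lt_top)]
  refine integral_congr_ae ?_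
  filter_upwards [hf0] with x hx
  rw [ENNReal.toReal_ofReal hx]

theorem integrable_withDensity_ofReal_iff (hf : AEMeasurable f μ) (hf0 : 0 ≤ᵐ[μ] f) {φ : X → E} :
    Integrable φ (μ.withDensity fun x => ENNReal.ofReal (f x)) ↔
      Integrable (fun x => f x • φ x) μ := by
  rw [integrable_withDensity_iff_integrable_smul₀' hf.ennreal_ofReal
    (ae_of_all _ fun _ => ENNReal.ofReal_lt_top)]
  refine integrable_congr ?_
  filter_upwards [hf0] with x hx
  rw [ENNReal.toReal_ofReal hx]

end MeasureTheory

namespace Real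

theorem sq_sqrt_sub_sqrt_le_sub_sub_mul_log {a b : ℝ} (ha : 0 < a) (hb : 0 < b) :
    (√a - √b) ^ 2 ≤ a - b - b * log (a / b) := by
  have hsa : 0 < √a := sqrt_pos.2 ha
  have hsb : 0 < √b := sqrt_pos.2 hb
  have hsq : a / b = (√a / √b) ^ 2 := by rw [div_pow, sq_sqrt ha.le, sq_sqrt hb.le]
  have hlog : log (a / b) ≤ 2 * (√a / √b - 1) := by
    rw [hsq, log_pow]
    push_cast
    linarith [log_le_sub_one_of_pos (div_pos hsa hsb)]
  have hb_eq : b * (√a / √b) = √a * √b := by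
    field_simp
    rw [sq_sqrt hb.le]
  nlinarith [mul_le_mul_of_nonneg_left hlog hb.le, sq_sqrt ha.le, sq_sqrt hb.le]

end Real

theorem bregman_ge_squared_hellinger_general
    {X : Type*} [MeasurableSpace X] (Q : Measure X)
    (g0 g : X → ℝ) (hg0pos : ∀ x, 0 < g0 x) (hgpos : ∀ x, 0 < g x)
    (hg0m : Measurable g0)
    (P : Measure X) (hP : P = Q.withDensity (fun x => ENNReal.ofReal (g0 x)))
    (hint1 : Integrable g Q) (hint2 : Integrable g0 Q)
    (hint3 : Integrable (fun x => Real.log (g x / g0 x)) P)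
    (hint4 : Integrable (fun x => (Real.sqrt (g x) - Real.sqrt (g0 x)) ^ 2) Q) :
    (∫ x, (g x - g0 x) ∂Q - ∫ x, Real.log (g x / g0 x) ∂P
      ≥ ∫ x, (Real.sqrt (g x) - Real.sqrt (g0 x)) ^ 2 ∂Q) ∧
    (∫ x, (Real.sqrt (g x) - Real.sqrt (g0 x)) ^ 2 ∂Q
      = 2 * ((1 / 2) * ∫ x, (Real.sqrt (g0 x) - Real.sqrt (g x)) ^ 2 ∂Q)) := by
  subst hP
  have hg0nn : 0 ≤ᵐ[Q] g0 := ae_of_all _ fun x => (hg0pos x).le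
  have hlogQ : Integrable (fun x => g0 x * log (g x / g0 x)) Q :=
    (integrable_withDensity_ofReal_iff hg0m.aemeasurable hg0nn).1 hint3
  refine ⟨?_, ?_⟩
  · calc ∫ x, (√(g x) - √(g0 x)) ^ 2 ∂Q
        ≤ ∫ x, (g x - g0 x - g0 x * log (g x / g0 x)) ∂Q :=
          integral_mono hint4 ((hint1.sub hint2).sub hlogQ) fun x =>
            sq_sqrt_sub_sqrt_le_sub_sub_mul_log (hgpos x) (hg0pos x)
      _ = _ := by
          rw [integral_withDensity_ofReal hg0m.aemeasurable hg0nn]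
          exact integral_sub (hint1.sub hint2) hlogQ
  · simp_rw [sub_sq_comm (√(g0 _))]
    ring

/-- With `g₀ = dP/dQ`, the Bregman-type distance
`d(g₀,g) = ∫ (g − g₀) dQ − ∫ log(g/g₀) dP` dominates the squared Hellinger distance:
`d(g₀,g) ≥ ∫ (√g − √g₀)² dQ = 2 h_Q²(g₀,g)`. -/
theorem bregman_ge_squared_hellinger
    {X : Type*} [MeasurableSpace X] (Q : Measure X) [IsProbabilityMeasure Q]
    (g0 g : X → ℝ) (hg0pos : ∀ x, 0 < g0 x) (hgpos : ∀ x, 0 < g x)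
    (hg0m : Measurable g0) (hgm : Measurable g)
    (P : Measure X) (hP : P = Q.withDensity (fun x => ENNReal.ofReal (g0 x)))
    [IsProbabilityMeasure P]
    (hint1 : Integrable g Q) (hint2 : Integrable g0 Q)
    (hint3 : Integrable (fun x => Real.log (g x / g0 x)) P)
    (hint4 : Integrable (fun x => (Real.sqrt (g x) - Real.sqrt (g0 x)) ^ 2) Q) :
    (∫ x, (g x - g0 x) ∂Q - ∫ x, Real.log (g x / g0 x) ∂P
      ≥ ∫ x, (Real.sqrt (g x) - Real.sqrt (g0 x)) ^ 2 ∂Q) ∧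
    (∫ x, (Real.sqrt (g x) - Real.sqrt (g0 x)) ^ 2 ∂Q
      = 2 * ((1 / 2) * ∫ x, (Real.sqrt (g0 x) - Real.sqrt (g x)) ^ 2 ∂Q)) :=
  bregman_ge_squared_hellinger_general Q g0 g hg0pos hgpos hg0m P hP hint1 hint2 hint3 hint4
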